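/- Let N ≥ 1, h = 1/N, Δt > 0, β ∈ ℝ, γ > 0, let m be a grid function with |m(I)| = 1 for every I, and let ṽ be a grid function satisfying (ṽ(I) − m(I))/Δt = −β m(I) × (Δ_h ṽ)(I) − γ m(I) × (m(I) × (Δ_h ṽ)(I)) for every I. Then (1/2)‖∇_h ṽ‖_2^2 + γ Δt · h^3 Σ_I | m(I) × (Δ_h ṽ)(I) |^2 ≤ (1/2)‖∇_h m‖_2^2. -/

import Mathlib

/-!
Pair the scheme with `w = Δ_h ṽ`: the precession term drops out because `(m × w) · w = 0`, and since
`a × ·` is skew-adjoint the damping term contributes `γ |m × w|²`. Summation by parts turns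
`Σ ⟨ṽ - m, Δ_h ṽ⟩` into `-Σ ⟨∇_h (ṽ - m), ∇_h ṽ⟩`, and convexity of `½ |·|²` bounds this by
`½ ‖∇_h m‖² - ½ ‖∇_h ṽ‖²`.
-/

open scoped BigOperators RealInnerProductSpace

noncomputable section

/-- Euclidean 3-space. -/
abbrev E3 : Type := EuclideanSpace ℝ (Fin 3)

/-- Cross product on `E3`. -/
def cross3 (a b : E3) : E3 :=
  (WithLp.equiv 2 (Fin 3 → ℝ)).symm
    ![a 1 * b 2 - a 2 * b 1, a 2 * b 0 - a 0 * b 2, a 0 * b 1 - a 1 * b 0]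

/-- Index set of the triply periodic grid. -/
abbrev Idx (N : ℕ) := Fin 3 → ZMod N

/-- Grid functions. -/
abbrev GridFun (N : ℕ) := Idx N → E3

/-- Forward difference in direction `r`. -/
def fd {N : ℕ} (h : ℝ) (r : Fin 3) (f : GridFun N) (I : Idx N) : E3 :=
  (1 / h) • (f (I + Pi.single r 1) - f I)

/-- Centered average in direction `r`. -/
def ca {N : ℕ} (r : Fin 3) (f : GridFun N) (I : Idx N) : E3 :=
  ((1 : ℝ) / 2) • (f (I + Pi.single r 1) + f I)

/-- Discrete Laplacian. -/
def dlap {N : ℕ} (h : ℝ) (f : GridFun N) (I : Idx N) : E3 :=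
  ∑ r : Fin 3, (1 / h ^ 2) • (f (I + Pi.single r 1) - (2 : ℝ) • f I + f (I - Pi.single r 1))

/-- Squared discrete `L²` norm. -/
def l2sq {N : ℕ} [NeZero N] (h : ℝ) (f : GridFun N) : ℝ :=
  h ^ 3 * ∑ I : Idx N, ‖f I‖ ^ 2

/-- Squared discrete gradient (`H¹` seminorm). -/
def gradsq {N : ℕ} [NeZero N] (h : ℝ) (f : GridFun N) : ℝ :=
  h ^ 3 * ∑ I : Idx N, ∑ r : Fin 3, ‖fd h r f I‖ ^ 2

/-- Discrete `ℓᵖ` norm, for real `p`. -/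
def pnorm {N : ℕ} [NeZero N] (h p : ℝ) (f : GridFun N) : ℝ :=
  (h ^ 3 * ∑ I : Idx N, ‖f I‖ ^ p) ^ (1 / p)

/-- Discrete `ℓ^∞` norm. -/
def inorm {N : ℕ} [NeZero N] (f : GridFun N) : ℝ :=
  ⨆ I : Idx N, ‖f I‖

/-- Discrete `ℓ^∞` norm of the gradient. -/
def ginorm {N : ℕ} [NeZero N] (h : ℝ) (f : GridFun N) : ℝ :=
  ⨆ I : Idx N, ⨆ r : Fin 3, ‖fd h r f I‖

lemma inner_E3 (x y : E3) : ⟪x, y⟫ = x 0 * y 0 + x 1 * y 1 + x 2 * y 2 := by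
  simp [PiLp.inner_apply, Fin.sum_univ_three, mul_comm]

lemma inner_cross3_left (a b c : E3) : ⟪cross3 a b, c⟫ = -⟪b, cross3 a c⟫ := by
  simp only [inner_E3, cross3, WithLp.equiv_symm_apply, Matrix.cons_val_zero,
    Matrix.cons_val_one, Matrix.cons_val]
  ring

lemma inner_cross3_self_right (a b : E3) : ⟪cross3 a b, b⟫ = 0 := by
  have := inner_cross3_left a b b
  rw [real_inner_comm] at this ⊢
  linarith

lemma inner_cross3_cross3 (a w : E3) : ⟪cross3 a (cross3 a w), w⟫ = -‖cross3 a w‖ ^ 2 := by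
  rw [inner_cross3_left, real_inner_comm, real_inner_self_eq_norm_sq]

lemma inner_sub_eq_of_step {Δt β γ : ℝ} {m v w : E3} (hΔt : Δt ≠ 0)
    (hstep : (1 / Δt) • (v - m) = -(β • cross3 m w) - γ • cross3 m (cross3 m w)) :
    ⟪v - m, w⟫ = γ * Δt * ‖cross3 m w‖ ^ 2 := by
  have h := congrArg (⟪·, w⟫) hstep
  simp only [real_inner_smul_left, inner_sub_left, inner_neg_left, inner_cross3_self_right,
    inner_cross3_cross3] at h
  field_simp at h
  rw [inner_sub_left]
  linarith

lemma sum_inner_sub_comp_sub {G F : Type*} [AddCommGroup G] [Fintype G] [NormedAddCommGroup F]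
    [InnerProductSpace ℝ F] (f g : G → F) (e : G) :
    ∑ x, ⟪f x, g x - g (x - e)⟫ = -∑ x, ⟪f (x + e) - f x, g x⟫ := by
  have shift : ∑ x, ⟪f x, g (x - e)⟫ = ∑ x, ⟪f (x + e), g x⟫ := by
    simpa using ((Equiv.subRight e).sum_comp fun x => ⟪f (x + e), g x⟫)
  simp only [inner_sub_left, inner_sub_right, Finset.sum_sub_distrib, shift]
  ring

lemma dlap_eq_sum_fd {N : ℕ} (h : ℝ) (g : GridFun N) (I : Idx N) :
    dlap h g I = ∑ r, (1 / h) • (fd h r g I - fd h r g (I - Pi.single r 1)) := by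
  refine Finset.sum_congr rfl fun r _ => ?_
  simp only [fd, sub_add_cancel, ← smul_sub, smul_smul]
  congr 1
  · ring
  · module

lemma sum_inner_dlap {N : ℕ} [NeZero N] (h : ℝ) (f g : GridFun N) :
    ∑ I, ⟪f I, dlap h g I⟫ = -∑ I, ∑ r, ⟪fd h r f I, fd h r g I⟫ := by
  simp only [dlap_eq_sum_fd, inner_sum, real_inner_smul_right]
  rw [Finset.sum_comm, Finset.sum_comm (f := fun I r => ⟪fd h r f I, fd h r g I⟫),
    ← Finset.sum_neg_distrib]
  refine Finset.sum_congr rfl fun r _ => ?_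
  rw [← Finset.mul_sum, sum_inner_sub_comp_sub f (fd h r g)]
  simp only [fd, real_inner_smul_left, ← Finset.mul_sum]
  ring

lemma half_sq_sub_half_sq_le_inner {F : Type*} [NormedAddCommGroup F] [InnerProductSpace ℝ F]
    (a b : F) :
    ‖b‖ ^ 2 / 2 - ‖a‖ ^ 2 / 2 ≤ ⟪b - a, b⟫ := by
  have := norm_sub_sq_real b a
  rw [inner_sub_left, real_inner_self_eq_norm_sq, real_inner_comm]
  nlinarith [sq_nonneg ‖b - a‖]

lemma half_gradsq_sub_le {N : ℕ} [NeZero N] {h : ℝ} (hh : 0 ≤ h) (f g : GridFun N) :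
    gradsq h g / 2 - gradsq h f / 2 ≤ -(h ^ 3 * ∑ I, ⟪g I - f I, dlap h g I⟫) := by
  have hsbp := sum_inner_dlap h (g - f) g
  simp only [Pi.sub_apply] at hsbp
  have hfd : ∀ r I, fd h r (g - f) I = fd h r g I - fd h r f I := fun r I => by
    simp only [fd, Pi.sub_apply, ← smul_sub]
    congr 1
    abel
  calc gradsq h g / 2 - gradsq h f / 2
      = h ^ 3 * ∑ I, ∑ r, (‖fd h r g I‖ ^ 2 / 2 - ‖fd h r f I‖ ^ 2 / 2) := by
        simp only [gradsq, Finset.sum_sub_distrib, ← Finset.sum_div]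
        ring
    _ ≤ h ^ 3 * ∑ I, ∑ r, ⟪fd h r (g - f) I, fd h r g I⟫ := by
        gcongr with I _ r _
        rw [hfd]
        exact half_sq_sub_half_sq_le_inner _ _
    _ = -(h ^ 3 * ∑ I, ⟪g I - f I, dlap h g I⟫) := by
        rw [hsbp]
        ring

theorem statement9_general (N : ℕ) [NeZero N] (h Δt β γ : ℝ) (hh : h = 1 / (N : ℝ))
    (hΔt : 0 < Δt) (m v : GridFun N)
    (hscheme : ∀ I : Idx N,
      (1 / Δt) • (v I - m I)
        = -(β • cross3 (m I) (dlap h v I))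
            - γ • cross3 (m I) (cross3 (m I) (dlap h v I))) :
    (1 / 2) * gradsq h v + γ * Δt * (h ^ 3 * ∑ I : Idx N, ‖cross3 (m I) (dlap h v I)‖ ^ 2)
      ≤ (1 / 2) * gradsq h m := by
  have hdamp : ∑ I, ⟪v I - m I, dlap h v I⟫ = γ * Δt * ∑ I, ‖cross3 (m I) (dlap h v I)‖ ^ 2 := by
    rw [Finset.mul_sum]
    exact Finset.sum_congr rfl fun I _ => inner_sub_eq_of_step hΔt.ne' (hscheme I)
  have henergy := half_gradsq_sub_le (h := h) (by rw [hh]; positivity) m v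
  rw [hdamp] at henergy
  linarith

/-- one-step energy inequality for the intermediate stage. -/
theorem statement9 (N : ℕ) [NeZero N] (hN : 1 ≤ N) (h Δt β γ : ℝ) (hh : h = 1 / (N : ℝ))
    (hΔt : 0 < Δt) (hγ : 0 < γ) (m v : GridFun N) (hm : ∀ I, ‖m I‖ = 1)
    (hscheme : ∀ I : Idx N,
      (1 / Δt) • (v I - m I)
        = -(β • cross3 (m I) (dlap h v I))
            - γ • cross3 (m I) (cross3 (m I) (dlap h v I))) :
    (1 / 2) * gradsq h v + γ * Δt * (h ^ 3 * ∑ I : Idx N, ‖cross3 (m I) (dlap h v I)‖ ^ 2)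
      ≤ (1 / 2) * gradsq h m :=
  statement9_general N h Δt β γ hh hΔt m v hscheme
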